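/- arXiv:0705.1364 — 2 statements merged into one kernel-verified Lean document; each statement's English description precedes it below -/
import Mathlib

section
/- Let n ≥ 1 be an integer, ε ∈ (0,1], h > 0, and θ ∈ [0, π/2), and set δ = ε·h·cos θ/(4n). Let H ⊆ ℝ be a finite set and let A = {j·δ : j ∈ ℤ} ∪ H. Let k be an integer with 0 ≤ k ≤ 2n − 1, and let p₀, p₁, …, p_k, p_{k+1} be points of ℝ³ whose heights are nonincreasing (height(p_i) ≥ height(p_{i+1}) for all 0 ≤ i ≤ k), with height(p₀) ∈ H. Suppose that for each i ∈ {1,…,k} there are points a_i, b_i ∈ ℝ³ with height(a_i) ∈ H, height(b_i) ∈ H, height(a_i) > height(b_i), height(a_i) − height(b_i) ≥ cos θ · ‖a_i − b_i‖, and p_i ∈ segment[a_i, b_i]. If Σ_{i=0}^{k} ‖p_i − p_{i+1}‖ ≥ h, then, writing p'₀ = p₀ and p'_{k+1} = p_{k+1}, there exist points p'₁, …, p'_k with p'_i ∈ segment[a_i, b_i] and height(p'_i) ∈ A for each i ∈ {1,…,k}, such that height(p'_i) ≥ height(p'_{i+1}) for all 0 ≤ i ≤ k, and Σ_{i=0}^{k}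 ‖p'_i − p'_{i+1}‖ < (1+ε) · Σ_{i=0}^{k} ‖p_i − p_{i+1}‖. -/
/-!
Move every interior point `pᵢ` up its edge to the lowest height of `A` that is at least
`height pᵢ`. Rounding up in `A` is monotone and fixes `height p₀ ∈ A`, so the new path still
descends, and the top endpoint of the edge has height in `A`, so the new point stays on the edge.
Rounding up raises the height by less than `δ`, and since the edge is at most `θ` away from the
vertical this moves the point by less than `δ / cos θ`. Each of the `k ≤ 2n - 1` moved points
lengthens at most two legs of the path, so the length grows by less than
`2k · δ / cos θ < ε h ≤ ε · length`.
-/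

open Finset

/-- The height of a point in ℝ³ is its third coordinate. -/
def height (p : EuclideanSpace ℝ (Fin 3)) : ℝ := p 2

section SnapUp

/-- The least element of `δℤ ∪ F` that is at least `x`. -/
noncomputable def snapUp (δ : ℝ) (F : Finset ℝ) (x : ℝ) : ℝ :=
  (insert ((⌈x / δ⌉ : ℝ) * δ) (F.filter fun y => x ≤ y)).min' (insert_nonempty _ _)

variable {δ : ℝ} (F : Finset ℝ)

theorem snapUp_mem (x : ℝ) :
    snapUp δ F x ∈ {y : ℝ | ∃ j : ℤ, y = (j : ℝ) * δ} ∪ (F : Set ℝ) := by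
  rcases mem_insert.mp (min'_mem _ (insert_nonempty ((⌈x / δ⌉ : ℝ) * δ) (F.filter fun y => x ≤ y)))
    with h | h
  · exact Or.inl ⟨⌈x / δ⌉, h⟩
  · exact Or.inr (mem_filter.mp h).1

variable (hδ : 0 < δ)
include hδ

theorem le_snapUp (x : ℝ) : x ≤ snapUp δ F x := by
  refine le_min' _ _ _ fun y hy => ?_
  rcases mem_insert.mp hy with rfl | h
  · exact (div_le_iff₀ hδ).mp (Int.le_ceil _)
  · exact (mem_filter.mp h).2

theorem snapUp_le {x c : ℝ} (hc : c ∈ {y : ℝ | ∃ j : ℤ, y = (j : ℝ) * δ} ∪ (F : Set ℝ))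
    (hxc : x ≤ c) : snapUp δ F x ≤ c := by
  rcases hc with ⟨j, rfl⟩ | hc
  · refine (min'_le _ _ (mem_insert_self _ _)).trans ?_
    have hj : ⌈x / δ⌉ ≤ j := Int.ceil_le.mpr ((div_le_iff₀ hδ).mpr hxc)
    exact mul_le_mul_of_nonneg_right (by exact_mod_cast hj) hδ.le
  · exact min'_le _ _ (mem_insert_of_mem (mem_filter.mpr ⟨hc, hxc⟩))

theorem snapUp_lt_add (x : ℝ) : snapUp δ F x < x + δ := by
  refine (min'_le _ _ (mem_insert_self _ _)).trans_lt ?_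
  have h := mul_lt_mul_of_pos_right (Int.ceil_lt_add_one (x / δ)) hδ
  rwa [add_mul, div_mul_cancel₀ _ hδ.ne', one_mul] at h

theorem snapUp_mono : Monotone (snapUp δ F) := fun _ _ hxy =>
  snapUp_le F hδ (snapUp_mem F _) (hxy.trans (le_snapUp F hδ _))

theorem snapUp_eq_self {x : ℝ} (hx : x ∈ {y : ℝ | ∃ j : ℤ, y = (j : ℝ) * δ} ∪ (F : Set ℝ)) :
    snapUp δ F x = x :=
  (snapUp_le F hδ hx le_rfl).antisymm (le_snapUp F hδ x)

end SnapUp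

theorem exists_mem_segment_map_eq_of_slope {E : Type*} [NormedAddCommGroup E] [NormedSpace ℝ E]
    (f : E →ₗ[ℝ] ℝ) {a b p : E} {c y : ℝ} (hc : 0 < c) (hslope : c * ‖a - b‖ ≤ f a - f b)
    (hp : p ∈ segment ℝ a b) (hpy : f p ≤ y) (hya : y ≤ f a) :
    ∃ q ∈ segment ℝ a b, f q = y ∧ c * ‖q - p‖ ≤ y - f p := by
  rw [segment_eq_image'] at hp ⊢
  obtain ⟨v, ⟨hv0, hv1⟩, rfl⟩ := hp
  set Δ := f a - f b
  have hf : ∀ t : ℝ, f (a + t • (b - a)) = f a - t * Δ := fun t => by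
    simp only [map_add, map_smul, map_sub, smul_eq_mul]; ring
  rw [hf] at hpy ⊢
  rcases (le_trans (by positivity) hslope : 0 ≤ Δ).eq_or_lt with hΔ | hΔ
  · rw [← hΔ, mul_zero, sub_zero] at hpy ⊢
    refine ⟨_, ⟨v, ⟨hv0, hv1⟩, rfl⟩, ?_, by rw [sub_self, norm_zero, mul_zero]; linarith⟩
    rw [hf, ← hΔ]; linarith
  set s := (y - (f a - v * Δ)) / Δ
  have hs0 : 0 ≤ s := div_nonneg (by linarith) hΔ.le
  have hsv : s ≤ v := by rw [div_le_iff₀ hΔ]; linarith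
  have hsΔ : s * Δ = y - (f a - v * Δ) := div_mul_cancel₀ _ hΔ.ne'
  refine ⟨_, ⟨v - s, ⟨by linarith, by linarith⟩, rfl⟩, by rw [hf]; linear_combination hsΔ, ?_⟩
  have hqp : a + (v - s) • (b - a) - (a + v • (b - a)) = s • (a - b) := by
    simp only [sub_smul, smul_sub]; abel
  calc c * ‖a + (v - s) • (b - a) - (a + v • (b - a))‖ = s * (c * ‖a - b‖) := by
        rw [hqp, norm_smul, Real.norm_of_nonneg hs0]; ring
    _ ≤ s * Δ := mul_le_mul_of_nonneg_left hslope hs0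
    _ = y - (f a - v * Δ) := hsΔ

theorem exists_mem_segment_map_eq_snapUp {E : Type*} [NormedAddCommGroup E] [NormedSpace ℝ E]
    (f : E →ₗ[ℝ] ℝ) {F : Finset ℝ} {δ c : ℝ} (hδ : 0 < δ) (hc : 0 < c) {a b p : E}
    (hslope : c * ‖a - b‖ ≤ f a - f b)
    (ha : f a ∈ {y : ℝ | ∃ j : ℤ, y = (j : ℝ) * δ} ∪ (F : Set ℝ)) (hp : p ∈ segment ℝ a b) :
    ∃ q ∈ segment ℝ a b, f q = snapUp δ F (f p) ∧ c * ‖q - p‖ < δ := by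
  have hpa : f p ≤ f a := (convex_halfSpace_le f.isLinear (f a)).segment_subset (le_refl (f a))
    (sub_nonneg.mp ((mul_nonneg hc.le (norm_nonneg _)).trans hslope)) hp
  obtain ⟨q, hq, hfq, hqp⟩ := exists_mem_segment_map_eq_of_slope f hc hslope hp
    (le_snapUp F hδ _) (snapUp_le F hδ ha hpa)
  exact ⟨q, hq, hfq, hqp.trans_lt (by linarith [snapUp_lt_add F hδ (f p)])⟩

theorem sum_norm_sub_le_of_norm_sub_le {E : Type*} [SeminormedAddCommGroup E] {p p' : ℕ → E} {k : ℕ}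
    {r : ℝ} (h0 : p' 0 = p 0) (hlast : p' (k + 1) = p (k + 1))
    (hmove : ∀ i, 1 ≤ i → i ≤ k → ‖p' i - p i‖ ≤ r) :
    ∑ i ∈ range (k + 1), ‖p' i - p' (i + 1)‖ ≤
      ∑ i ∈ range (k + 1), ‖p i - p (i + 1)‖ + 2 * k * r := by
  set D : ℕ → ℝ := fun i => ‖p' i - p i‖
  have hinner : ∑ i ∈ range k, D (i + 1) ≤ k * r := by
    simpa using sum_le_sum fun i (hi : i ∈ range k) =>
      hmove (i + 1) (Nat.le_add_left 1 i) (mem_range.mp hi)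
  have hleg : ∀ i, ‖p' i - p' (i + 1)‖ ≤ D i + ‖p i - p (i + 1)‖ + D (i + 1) := fun i =>
    (norm_sub_le_norm_sub_add_norm_sub _ (p (i + 1)) _).trans <| add_le_add
      (norm_sub_le_norm_sub_add_norm_sub _ _ _) (norm_sub_rev _ _).le
  have hD0 : D 0 = 0 := by simp [D, h0]
  have hDlast : D (k + 1) = 0 := by simp [D, hlast]
  calc ∑ i ∈ range (k + 1), ‖p' i - p' (i + 1)‖
      ≤ ∑ i ∈ range (k + 1), (D i + ‖p i - p (i + 1)‖ + D (i + 1)) := sum_le_sum fun i _ => hleg i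
    _ = ∑ i ∈ range (k + 1), ‖p i - p (i + 1)‖ + 2 * ∑ i ∈ range k, D (i + 1) := by
      rw [sum_add_distrib, sum_add_distrib, sum_range_succ' D, sum_range_succ (fun i => D (i + 1)),
        hD0, hDlast]
      ring
    _ ≤ _ := by linarith

theorem succ_le_of_eq_comp_monotone {s : ℝ → ℝ} (hs : Monotone s) {g g' : ℕ → ℝ} {k : ℕ}
    (hg : ∀ i ≤ k, g (i + 1) ≤ g i) (heq : ∀ i ≤ k, g' i = s (g i))
    (hlast : g' (k + 1) ≤ s (g (k + 1))) :
    ∀ i ≤ k, g' (i + 1) ≤ g' i := by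
  intro i hi
  rw [heq i hi]
  refine le_trans ?_ (hs (hg i hi))
  obtain rfl | hik := hi.eq_or_lt
  · exact hlast
  · exact (heq (i + 1) hik).le

theorem stmt_0_general (n : ℕ) (hn : 1 ≤ n) (ε h θ : ℝ) (hε0 : 0 < ε)
    (hh : 0 < h) (hθ0 : 0 ≤ θ) (hθ : θ < Real.pi / 2)
    (δ : ℝ) (hδ : δ = ε * h * Real.cos θ / (4 * n))
    (H : Set ℝ) (hH : H.Finite)
    (A : Set ℝ) (hA : A = {x : ℝ | ∃ j : ℤ, x = (j : ℝ) * δ} ∪ H)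
    (k : ℕ) (hk : k ≤ 2 * n - 1)
    (p : ℕ → EuclideanSpace ℝ (Fin 3))
    (hdesc : ∀ i, i ≤ k → height (p (i + 1)) ≤ height (p i))
    (hp0 : height (p 0) ∈ H)
    (a b : ℕ → EuclideanSpace ℝ (Fin 3))
    (haH : ∀ i, 1 ≤ i → i ≤ k → height (a i) ∈ H)
    (hangle : ∀ i, 1 ≤ i → i ≤ k →
      Real.cos θ * ‖a i - b i‖ ≤ height (a i) - height (b i))
    (hpseg : ∀ i, 1 ≤ i → i ≤ k → p i ∈ segment ℝ (a i) (b i))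
    (hlen : h ≤ ∑ i ∈ Finset.range (k + 1), ‖p i - p (i + 1)‖) :
    ∃ p' : ℕ → EuclideanSpace ℝ (Fin 3),
      p' 0 = p 0 ∧ p' (k + 1) = p (k + 1) ∧
      (∀ i, 1 ≤ i → i ≤ k →
        p' i ∈ segment ℝ (a i) (b i) ∧ height (p' i) ∈ A) ∧
      (∀ i, i ≤ k → height (p' (i + 1)) ≤ height (p' i)) ∧
      ∑ i ∈ Finset.range (k + 1), ‖p' i - p' (i + 1)‖ <
        (1 + ε) * ∑ i ∈ Finset.range (k + 1), ‖p i - p (i + 1)‖ := by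
  have hcos : 0 < Real.cos θ := Real.cos_pos_of_mem_Ioo ⟨by linarith [Real.pi_pos], hθ⟩
  have hn' : (0 : ℝ) < n := by exact_mod_cast hn
  have hδ0 : 0 < δ := by rw [hδ]; positivity
  set F := hH.toFinset
  rw [← hH.coe_toFinset] at hA hp0 haH
  have hedge : ∀ i, 1 ≤ i → i ≤ k → ∃ q ∈ segment ℝ (a i) (b i),
      height q = snapUp δ F (height (p i)) ∧ Real.cos θ * ‖q - p i‖ < δ := fun i hi hik =>
    exists_mem_segment_map_eq_snapUp (EuclideanSpace.proj (2 : Fin 3)).toLinearMap hδ0 hcos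
      (hangle i hi hik) (Or.inr (haH i hi hik)) (hpseg i hi hik)
  choose! q hq_seg hq_height hq_dist using hedge
  set p' := fun i => if 1 ≤ i ∧ i ≤ k then q i else p i
  have hp'_int : ∀ i, 1 ≤ i → i ≤ k → p' i = q i := fun i hi hik => if_pos ⟨hi, hik⟩
  have hp'0 : p' 0 = p 0 := if_neg (by omega)
  have hp'last : p' (k + 1) = p (k + 1) := if_neg (by omega)
  refine ⟨p', hp'0, hp'last, fun i hi hik => ?_, ?_, ?_⟩
  · rw [hp'_int i hi hik, hA, hq_height i hi hik]
    exact ⟨hq_seg i hi hik, snapUp_mem F _⟩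
  · refine succ_le_of_eq_comp_monotone (g := fun i => height (p i)) (g' := fun i => height (p' i))
      (snapUp_mono F hδ0) hdesc (fun i hi => ?_) (by rw [hp'last]; exact le_snapUp F hδ0 _)
    rcases Nat.eq_zero_or_pos i with rfl | hi0
    · rw [hp'0, snapUp_eq_self F hδ0 (Or.inr hp0)]
    · rw [hp'_int i hi0 hi, hq_height i hi0 hi]
  have hclose : ∀ i, 1 ≤ i → i ≤ k → ‖p' i - p i‖ ≤ δ / Real.cos θ := fun i hi hik => by
    rw [hp'_int i hi hik, le_div_iff₀' hcos]
    exact (hq_dist i hi hik).le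
  have hgrowth : 2 * k * (δ / Real.cos θ) < ε * h := by
    have hk' : (k : ℝ) < 2 * n := by exact_mod_cast (by omega : k < 2 * n)
    have hδcos : δ / Real.cos θ * (4 * n) = ε * h := by rw [hδ]; field_simp
    nlinarith [mul_lt_mul_of_pos_right hk' (div_pos hδ0 hcos)]
  calc _ ≤ _ := sum_norm_sub_le_of_norm_sub_le hp'0 hp'last hclose
    _ < _ := by linarith [mul_le_mul_of_nonneg_left hlen hε0.le]

theorem stmt_0 (n : ℕ) (hn : 1 ≤ n) (ε h θ : ℝ) (hε0 : 0 < ε) (hε1 : ε ≤ 1)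
    (hh : 0 < h) (hθ0 : 0 ≤ θ) (hθ : θ < Real.pi / 2)
    (δ : ℝ) (hδ : δ = ε * h * Real.cos θ / (4 * n))
    (H : Set ℝ) (hH : H.Finite)
    (A : Set ℝ) (hA : A = {x : ℝ | ∃ j : ℤ, x = (j : ℝ) * δ} ∪ H)
    (k : ℕ) (hk : k ≤ 2 * n - 1)
    (p : ℕ → EuclideanSpace ℝ (Fin 3))
    (hdesc : ∀ i, i ≤ k → height (p (i + 1)) ≤ height (p i))
    (hp0 : height (p 0) ∈ H)
    (a b : ℕ → EuclideanSpace ℝ (Fin 3))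
    (haH : ∀ i, 1 ≤ i → i ≤ k → height (a i) ∈ H)
    (hbH : ∀ i, 1 ≤ i → i ≤ k → height (b i) ∈ H)
    (hab : ∀ i, 1 ≤ i → i ≤ k → height (b i) < height (a i))
    (hangle : ∀ i, 1 ≤ i → i ≤ k →
      Real.cos θ * ‖a i - b i‖ ≤ height (a i) - height (b i))
    (hpseg : ∀ i, 1 ≤ i → i ≤ k → p i ∈ segment ℝ (a i) (b i))
    (hlen : h ≤ ∑ i ∈ Finset.range (k + 1), ‖p i - p (i + 1)‖) :
    ∃ p' : ℕ → EuclideanSpace ℝ (Fin 3),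
      p' 0 = p 0 ∧ p' (k + 1) = p (k + 1) ∧
      (∀ i, 1 ≤ i → i ≤ k →
        p' i ∈ segment ℝ (a i) (b i) ∧ height (p' i) ∈ A) ∧
      (∀ i, i ≤ k → height (p' (i + 1)) ≤ height (p' i)) ∧
      ∑ i ∈ Finset.range (k + 1), ‖p' i - p' (i + 1)‖ <
        (1 + ε) * ∑ i ∈ Finset.range (k + 1), ‖p i - p (i + 1)‖ :=
  stmt_0_general n hn ε h θ hε0 hh hθ0 hθ δ hδ H hH A hA k hk p hdesc hp0 a b haH hangle hpseg hlen
end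

section
/- Let δ > 0 and θ ∈ [0, π/2). Let H ⊆ ℝ be a finite set and let A = {j·δ : j ∈ ℤ} ∪ H. Let k ≥ 1 and, for each i ∈ {1,…,k}, let a_i, b_i ∈ ℝ³ with height(a_i) ∈ H, height(b_i) ∈ H, height(a_i) > height(b_i), and height(a_i) − height(b_i) ≥ cos θ · ‖a_i − b_i‖. Let p_i ∈ segment[a_i, b_i] for each i, with height(p₁) ≥ height(p₂) ≥ … ≥ height(p_k). Then there exist points p'₁, …, p'_k with: p'_i ∈ segment[a_i, b_i]; height(p'_i) ∈ A; height(p_i) ≤ height(p'_i); height(p'₁) ≥ height(p'₂) ≥ … ≥ height(p'_k); and ‖p_i − p'_i‖ ≤ δ/cos θ for every i. -/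
/-! Snap each height `height (p i)` up to the least element of `A` at or above it. Snapping is
monotone, so the order of the heights survives; it never passes `height (a i) ∈ A`,
so the new point stays on the segment; and it raises the height by at most `δ`, which along a
segment inclined at most `θ` from the vertical is a displacement of at most `δ / cos θ`. -/

open Set Real

section Segment

variable {E : Type*}

theorem LinearMap.image_segment_eq_Icc [AddCommGroup E] [Module ℝ E] (f : E →ₗ[ℝ] ℝ) {a b : E}
    (h : f b ≤ f a) : f '' segment ℝ a b = Icc (f b) (f a) := by
  rw [segment_symm, ← segment_eq_Icc h]
  exact image_segment ℝ f.toAffineMap b a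

theorem LinearMap.mul_norm_sub_le_abs_sub_of_mem_segment [NormedAddCommGroup E] [NormedSpace ℝ E]
    (f : E →ₗ[ℝ] ℝ) {a b x y : E} {c : ℝ} (hab : c * ‖a - b‖ ≤ |f a - f b|)
    (hx : x ∈ segment ℝ a b) (hy : y ∈ segment ℝ a b) : c * ‖x - y‖ ≤ |f x - f y| := by
  rw [segment_eq_image'] at hx hy
  obtain ⟨s, -, rfl⟩ := hx
  obtain ⟨t, -, rfl⟩ := hy
  have hxy : a + s • (b - a) - (a + t • (b - a)) = (t - s) • (a - b) := by module
  rw [← map_sub, hxy, map_smul, norm_smul, smul_eq_mul, abs_mul, map_sub, Real.norm_eq_abs]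
  calc c * (|t - s| * ‖a - b‖) = |t - s| * (c * ‖a - b‖) := by ring
    _ ≤ |t - s| * |f a - f b| := by gcongr

end Segment

theorem coe_projₗ_two_eq_height : ⇑(EuclideanSpace.projₗ (𝕜 := ℝ) (2 : Fin 3)) = height := rfl

theorem isLeast_zmultiples_inter_Ici {δ : ℝ} (hδ : 0 < δ) (y : ℝ) :
    IsLeast ({x : ℝ | ∃ j : ℤ, x = (j : ℝ) * δ} ∩ Ici y) (⌈y / δ⌉ * δ) := by
  refine ⟨⟨⟨_, rfl⟩, (div_le_iff₀ hδ).mp (Int.le_ceil _)⟩, ?_⟩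
  rintro _ ⟨⟨j, rfl⟩, hy⟩
  have : ⌈y / δ⌉ ≤ j := Int.ceil_le.mpr ((div_le_iff₀ hδ).mpr hy)
  gcongr

theorem ceil_div_mul_le_add {δ : ℝ} (hδ : 0 < δ) (y : ℝ) : ⌈y / δ⌉ * δ ≤ y + δ := by
  have := (Int.ceil_lt_add_one (y / δ)).le
  calc (⌈y / δ⌉ : ℝ) * δ ≤ (y / δ + 1) * δ := by gcongr
    _ = y + δ := by field_simp

theorem IsLeast.exists_isLeast_union_inter_Ici {S T : Set ℝ} {y g : ℝ}
    (hg : IsLeast (S ∩ Ici y) g) (hT : T.Finite) :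
    ∃ z, IsLeast ((S ∪ T) ∩ Ici y) z ∧ z ≤ g := by
  rw [union_inter_distrib_right]
  rcases (T ∩ Ici y).eq_empty_or_nonempty with hTy | hTy
  · exact ⟨g, by rwa [hTy, union_empty], le_rfl⟩
  · obtain ⟨m, hm⟩ := (hT.inter_of_left _).isCompact.exists_isLeast hTy
    exact ⟨min g m, hg.union hm, min_le_left _ _⟩

theorem exists_isLeast_zmultiples_union_inter_Ici {δ : ℝ} (hδ : 0 < δ) {H : Set ℝ}
    (hH : H.Finite) (y : ℝ) :
    ∃ z, IsLeast (({x : ℝ | ∃ j : ℤ, x = (j : ℝ) * δ} ∪ H) ∩ Ici y) z ∧ z ≤ y + δ := by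
  obtain ⟨z, hz, hzg⟩ := (isLeast_zmultiples_inter_Ici hδ y).exists_isLeast_union_inter_Ici hH
  exact ⟨z, hz, hzg.trans (ceil_div_mul_le_add hδ y)⟩

theorem stmt_5_general (δ θ : ℝ) (hδ : 0 < δ) (hθ0 : 0 ≤ θ) (hθ : θ < Real.pi / 2)
    (H : Set ℝ) (hH : H.Finite)
    (A : Set ℝ) (hA : A = {x : ℝ | ∃ j : ℤ, x = (j : ℝ) * δ} ∪ H)
    (k : ℕ)
    (a b : ℕ → EuclideanSpace ℝ (Fin 3))
    (haH : ∀ i, 1 ≤ i → i ≤ k → height (a i) ∈ H)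
    (hab : ∀ i, 1 ≤ i → i ≤ k → height (b i) < height (a i))
    (hangle : ∀ i, 1 ≤ i → i ≤ k →
      Real.cos θ * ‖a i - b i‖ ≤ height (a i) - height (b i))
    (p : ℕ → EuclideanSpace ℝ (Fin 3))
    (hp : ∀ i, 1 ≤ i → i ≤ k → p i ∈ segment ℝ (a i) (b i))
    (hdesc : ∀ i, 1 ≤ i → i ≤ k - 1 → height (p (i + 1)) ≤ height (p i)) :
    ∃ p' : ℕ → EuclideanSpace ℝ (Fin 3),
      (∀ i, 1 ≤ i → i ≤ k →
        p' i ∈ segment ℝ (a i) (b i) ∧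
        height (p' i) ∈ A ∧
        height (p i) ≤ height (p' i) ∧
        ‖p i - p' i‖ ≤ δ / Real.cos θ) ∧
      (∀ i, 1 ≤ i → i ≤ k - 1 → height (p' (i + 1)) ≤ height (p' i)) := by
  subst hA
  have hcos : 0 < cos θ := cos_pos_of_mem_Ioo ⟨by linarith [pi_pos], hθ⟩
  choose z hz hzδ using exists_isLeast_zmultiples_union_inter_Ici hδ hH
  have hseg i (h₁ : 1 ≤ i) (h₂ : i ≤ k) :
      (EuclideanSpace.projₗ 2) '' segment ℝ (a i) (b i) = Icc (height (b i)) (height (a i)) :=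
    LinearMap.image_segment_eq_Icc _ (hab i h₁ h₂).le
  have hz_mem_image i (h₁ : 1 ≤ i) (h₂ : i ≤ k) :
      z (height (p i)) ∈ (EuclideanSpace.projₗ 2) '' segment ℝ (a i) (b i) := by
    have hpi := hseg i h₁ h₂ ▸ mem_image_of_mem _ (hp i h₁ h₂)
    rw [hseg i h₁ h₂]
    exact ⟨hpi.1.trans (hz _).1.2, (hz _).2 ⟨Or.inr (haH i h₁ h₂), hpi.2⟩⟩
  choose! p' hp'seg hp'z using hz_mem_image
  rw [coe_projₗ_two_eq_height] at hp'z
  refine ⟨p', fun i h₁ h₂ => ⟨hp'seg i h₁ h₂, ?_, ?_, ?_⟩, fun i h₁ h₂ => ?_⟩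
  · exact hp'z i h₁ h₂ ▸ (hz _).1.1
  · exact hp'z i h₁ h₂ ▸ (hz _).1.2
  · have hslope : cos θ * ‖a i - b i‖ ≤ |height (a i) - height (b i)| :=
      (hangle i h₁ h₂).trans (le_abs_self _)
    have := (EuclideanSpace.projₗ 2).mul_norm_sub_le_abs_sub_of_mem_segment hslope
      (hp i h₁ h₂) (hp'seg i h₁ h₂)
    rw [coe_projₗ_two_eq_height, hp'z i h₁ h₂, abs_sub_comm, abs_of_nonneg (sub_nonneg.mpr (hz _).1.2)] at this
    rw [le_div_iff₀ hcos]
    linarith [hzδ (height (p i))]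
  · rw [hp'z i h₁ (by omega), hp'z (i + 1) (by omega) (by omega)]
    exact (hz _).2 ⟨(hz _).1.1, (hdesc i h₁ h₂).trans (hz _).1.2⟩

theorem stmt_5 (δ θ : ℝ) (hδ : 0 < δ) (hθ0 : 0 ≤ θ) (hθ : θ < Real.pi / 2)
    (H : Set ℝ) (hH : H.Finite)
    (A : Set ℝ) (hA : A = {x : ℝ | ∃ j : ℤ, x = (j : ℝ) * δ} ∪ H)
    (k : ℕ) (hk : 1 ≤ k)
    (a b : ℕ → EuclideanSpace ℝ (Fin 3))
    (haH : ∀ i, 1 ≤ i → i ≤ k → height (a i) ∈ H)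
    (hbH : ∀ i, 1 ≤ i → i ≤ k → height (b i) ∈ H)
    (hab : ∀ i, 1 ≤ i → i ≤ k → height (b i) < height (a i))
    (hangle : ∀ i, 1 ≤ i → i ≤ k →
      Real.cos θ * ‖a i - b i‖ ≤ height (a i) - height (b i))
    (p : ℕ → EuclideanSpace ℝ (Fin 3))
    (hp : ∀ i, 1 ≤ i → i ≤ k → p i ∈ segment ℝ (a i) (b i))
    (hdesc : ∀ i, 1 ≤ i → i ≤ k - 1 → height (p (i + 1)) ≤ height (p i)) :
    ∃ p' : ℕ → EuclideanSpace ℝ (Fin 3),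
      (∀ i, 1 ≤ i → i ≤ k →
        p' i ∈ segment ℝ (a i) (b i) ∧
        height (p' i) ∈ A ∧
        height (p i) ≤ height (p' i) ∧
        ‖p i - p' i‖ ≤ δ / Real.cos θ) ∧
      (∀ i, 1 ≤ i → i ≤ k - 1 → height (p' (i + 1)) ≤ height (p' i)) :=
  stmt_5_general δ θ hδ hθ0 hθ H hH A hA k a b haH hab hangle p hp hdesc
end
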